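/- arXiv:1903.03079 — 3 statements merged into one kernel-verified Lean document; each statement's English description precedes it below -/
import Mathlib

section
/- Let A be a commutative k-algebra over a field k with subalgebras B, C ⊆ A such that B ∪ C generates A, and suppose there exist c_1,...,c_m ∈ C such that (a) the B-submodule of A generated by c_1,...,c_m is free with basis c_1,...,c_m, and (b) C is generated by c_1,...,c_m as a module over B ∩ C. Then the natural multiplication map B ⊗_{B∩C} C → A is an isomorphism. -/
set_option synthInstance.maxHeartbeats 1000000 in
set_option maxHeartbeats 2000000 in
/-- If a commutative `k`-algebra `A` is generated by subalgebras `B` and `C`, and there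
are `c_1, ..., c_m ∈ C` which are a `B`-basis of the `B`-submodule they generate and
which generate `C` as a `B ∩ C`-module, then the multiplication map
`B ⊗_{B ∩ C} C → A` is an isomorphism. -/
theorem stmt3 {k A : Type*} [Field k] [CommRing A] [Algebra k A]
    (B C : Subalgebra k A)
    (hgen : Algebra.adjoin k ((B : Set A) ∪ (C : Set A)) = ⊤)
    (m : ℕ) (c : Fin m → A) (hc : ∀ i, c i ∈ C)
    (hfree : LinearIndependent (↥B) c)
    (hspan : ∀ x ∈ C, x ∈ Submodule.span (↥(B ⊓ C)) (Set.range c)) :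
    letI : Algebra (↥(B ⊓ C)) ↥B :=
      (Subalgebra.inclusion (inf_le_left : B ⊓ C ≤ B)).toAlgebra
    letI : Algebra (↥(B ⊓ C)) ↥C :=
      (Subalgebra.inclusion (inf_le_right : B ⊓ C ≤ C)).toAlgebra
    Function.Bijective
      (Algebra.TensorProduct.productMap
        (⟨B.val.toRingHom, fun r => rfl⟩ : ↥B →ₐ[↥(B ⊓ C)] A)
        (⟨C.val.toRingHom, fun r => rfl⟩ : ↥C →ₐ[↥(B ⊓ C)] A)) := by
  letI : Algebra (↥(B ⊓ C)) ↥B :=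
    (Subalgebra.inclusion (inf_le_left : B ⊓ C ≤ B)).toAlgebra
  letI : Algebra (↥(B ⊓ C)) ↥C :=
    (Subalgebra.inclusion (inf_le_right : B ⊓ C ≤ C)).toAlgebra
  set f := (Algebra.TensorProduct.productMap
        (⟨B.val.toRingHom, fun r => rfl⟩ : ↥B →ₐ[↥(B ⊓ C)] A)
        (⟨C.val.toRingHom, fun r => rfl⟩ : ↥C →ₐ[↥(B ⊓ C)] A)) with hf
  constructor
  · -- injectivity
    set R := ↥(B ⊓ C)
    set c' : Fin m → ↥C := fun i => ⟨c i, hc i⟩ with hc'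
    -- transfer the spanning hypothesis from `A` to `C`
    have hspan' : ∀ y : ↥C, y ∈ Submodule.span R (Set.range c') := by
      intro y
      have h1 : (y : A) ∈ Submodule.span R (Set.range c) := hspan y.1 y.2
      let ι : ↥C →ₗ[R] A :=
        (⟨C.val.toRingHom, fun r => rfl⟩ : ↥C →ₐ[R] A).toLinearMap
      have h2 : Submodule.span R (Set.range c)
          = Submodule.map ι (Submodule.span R (Set.range c')) := by
        rw [Submodule.map_span]
        congr 1
        rw [← Set.range_comp]
        rfl
      rw [h2] at h1
      obtain ⟨z, hz, hzy⟩ := h1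
      have : z = y := Subtype.ext hzy
      rwa [this] at hz
    -- the `B`-linear map sending `v` to `∑ i, v i ⊗ c' i`
    let F : (Fin m → ↥B) →ₗ[↥B] TensorProduct R ↥B ↥C :=
      { toFun := fun v => ∑ i, v i ⊗ₜ[R] c' i
        map_add' := by
          intro u v
          rw [← Finset.sum_add_distrib]
          exact Finset.sum_congr rfl fun i _ => by simp [TensorProduct.add_tmul]
        map_smul' := by
          intro b v
          show (∑ i, (b • v) i ⊗ₜ[R] c' i) = b • ∑ i, v i ⊗ₜ[R] c' i
          rw [Finset.smul_sum]
          exact Finset.sum_congr rfl fun i _ => by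
            rw [TensorProduct.smul_tmul']; rfl }
    have hFsurj : Function.Surjective F := by
      intro t
      induction t using TensorProduct.induction_on with
      | zero => exact ⟨0, by simp [F]⟩
      | tmul b y =>
          obtain ⟨r, hr⟩ := (Submodule.mem_span_range_iff_exists_fun R).mp (hspan' y)
          refine ⟨fun i => r i • b, ?_⟩
          have : b ⊗ₜ[R] y = ∑ i, (r i • b) ⊗ₜ[R] c' i := by
            rw [← hr, TensorProduct.tmul_sum]
            exact Finset.sum_congr rfl fun i _ => by
              rw [TensorProduct.tmul_smul, TensorProduct.smul_tmul']
          simp [F, ← this]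
      | add x y hx hy =>
          obtain ⟨u, hu⟩ := hx
          obtain ⟨v, hv⟩ := hy
          exact ⟨u + v, by rw [map_add, hu, hv]⟩
    rw [injective_iff_map_eq_zero]
    intro t ht
    obtain ⟨v, rfl⟩ := hFsurj t
    have hfv : f (F v) = ∑ i, v i • c i := by
      simp only [F, LinearMap.coe_mk, AddHom.coe_mk, map_sum, hf,
        Algebra.TensorProduct.productMap_apply_tmul]
      exact Finset.sum_congr rfl fun i _ => by
        rw [Algebra.smul_def, Subalgebra.algebraMap_eq]
        rfl
    rw [hfv] at ht
    have hv0 : ∀ i, v i = 0 := Fintype.linearIndependent_iff.mp hfree v ht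
    have : v = 0 := funext hv0
    rw [this, map_zero]
  · -- surjectivity
    intro a
    have ha : a ∈ Algebra.adjoin k ((B : Set A) ∪ (C : Set A)) := hgen ▸ Algebra.mem_top
    have hle : Algebra.adjoin k ((B : Set A) ∪ (C : Set A))
        ≤ Subalgebra.restrictScalars k f.range := by
      apply Algebra.adjoin_le
      rintro x (hx | hx)
      · exact ⟨(⟨x, hx⟩ : ↥B) ⊗ₜ 1, by simp [hf]⟩
      · exact ⟨1 ⊗ₜ (⟨x, hx⟩ : ↥C), by simp [hf]⟩
    exact hle ha
end

section
/- Let p be a prime, and let r, m be positive integers with r ≤ m. Suppose d_0, d_1, d_2, ... is a finitely supported sequence of non-negative integers with ∑_{j≥0} d_j = m and ∑_{j≥1} d_j (jp - j + 1) = rp. Then ∑_{j≥1} d_j ≤ r, with equality if and only if d_1 = r, d_j = 0 for all j ≥ 2 (and hence d_0 = m - r). -/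
/-- If `(d_j)` is a finitely supported sequence of naturals with `∑_j d_j = m` and
`∑_{j ≥ 1} d_j (jp - j + 1) = rp`, then `∑_{j ≥ 1} d_j ≤ r`, with equality iff
`d_1 = r`, `d_j = 0` for `j ≥ 2` (and hence `d_0 = m - r`). -/
theorem stmt11 (p : ℕ) (hp : p.Prime) (r m : ℕ) (hr : 1 ≤ r) (hrm : r ≤ m)
    (d : ℕ → ℕ) (hfin : (Function.support d).Finite)
    (hsum : ∑ᶠ j, d j = m)
    (hweight : ∑ᶠ j, d (j + 1) * ((j + 1) * p - (j + 1) + 1) = r * p) :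
    (∑ᶠ j, d (j + 1)) ≤ r ∧
      ((∑ᶠ j, d (j + 1)) = r ↔
        d 0 = m - r ∧ d 1 = r ∧ ∀ j, 2 ≤ j → d j = 0) := by
  have hp2 : 2 ≤ p := hp.two_le
  -- get a bound on the support
  obtain ⟨N, hN⟩ := hfin.bddAbove
  have hd0 : ∀ j, N + 1 ≤ j → d j = 0 := by
    intro j hj
    by_contra h
    exact absurd (hN h) (by omega)
  -- weight of each index
  have hw : ∀ j : ℕ, (j + 1) * p - (j + 1) + 1 = (j + 1) * (p - 1) + 1 := by
    intro j
    obtain ⟨q, rfl⟩ : ∃ q, p = q + 1 := ⟨p - 1, by omega⟩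
    simp [Nat.mul_succ]
  -- convert finsums to finset sums
  have hsub1 : Function.support (fun j => d (j + 1)) ⊆ ↑(Finset.range (N + 1)) := by
    intro j hj
    simp only [Function.mem_support] at hj
    simp only [Finset.coe_range, Set.mem_Iio]
    by_contra h
    exact hj (hd0 (j + 1) (by omega))
  have hsub2 : Function.support (fun j => d (j + 1) * ((j + 1) * p - (j + 1) + 1)) ⊆
      ↑(Finset.range (N + 1)) := by
    intro j hj
    simp only [Function.mem_support] at hj
    simp only [Finset.coe_range, Set.mem_Iio]
    by_contra h
    apply hj
    rw [hd0 (j + 1) (by omega)]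
    ring
  have hsub0 : Function.support d ⊆ ↑(Finset.range (N + 2)) := by
    intro j hj
    simp only [Function.mem_support] at hj
    simp only [Finset.coe_range, Set.mem_Iio]
    by_contra h
    exact hj (hd0 j (by omega))
  have hS : (∑ᶠ j, d (j + 1)) = ∑ j ∈ Finset.range (N + 1), d (j + 1) :=
    finsum_eq_sum_of_support_subset _ hsub1
  have hW : (∑ j ∈ Finset.range (N + 1), d (j + 1) * ((j + 1) * p - (j + 1) + 1)) = r * p := by
    rw [← finsum_eq_sum_of_support_subset _ hsub2]; exact hweight
  have hM : (∑ j ∈ Finset.range (N + 2), d j) = m := by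
    rw [← finsum_eq_sum_of_support_subset _ hsub0]; exact hsum
  set S := ∑ j ∈ Finset.range (N + 1), d (j + 1) with hSdef
  -- key inequality : p * S ≤ r * p
  have hkey : S * p ≤ r * p := by
    rw [← hW, hSdef, Finset.sum_mul]
    apply Finset.sum_le_sum
    intro j _
    rw [hw j]
    have h1 : p - 1 ≤ (j + 1) * (p - 1) := Nat.le_mul_of_pos_left (p - 1) (Nat.succ_pos j)
    exact Nat.mul_le_mul_left _ (by omega)
  have hle : S ≤ r := Nat.le_of_mul_le_mul_right hkey (by omega)
  rw [hS]
  refine ⟨hle, ?_, ?_⟩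
  · -- forward direction
    intro hSr
    -- equality in the sum: all terms with j ≥ 1 vanish
    have heq : ∑ j ∈ Finset.range (N + 1), d (j + 1) * ((j + 1) * (p - 1) + 1)
        = ∑ j ∈ Finset.range (N + 1), d (j + 1) * p := by
      have h1 : ∑ j ∈ Finset.range (N + 1), d (j + 1) * p = S * p := by
        rw [hSdef, Finset.sum_mul]
      have h2 : ∑ j ∈ Finset.range (N + 1), d (j + 1) * ((j + 1) * (p - 1) + 1) = r * p := by
        rw [← hW]
        exact Finset.sum_congr rfl fun j _ => by rw [hw j]
      rw [h1, h2, hSr]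
    have hterm : ∀ j ∈ Finset.range (N + 1),
        d (j + 1) * ((j + 1) * (p - 1) + 1) = d (j + 1) * p := by
      have hsub : ∀ j ∈ Finset.range (N + 1),
          d (j + 1) * p ≤ d (j + 1) * ((j + 1) * (p - 1) + 1) := by
        intro j _
        apply Nat.mul_le_mul_left
        have h1 : p - 1 ≤ (j + 1) * (p - 1) := Nat.le_mul_of_pos_left (p - 1) (Nat.succ_pos j)
        omega
      intro j hj
      by_contra hne
      have hlt : d (j + 1) * p < d (j + 1) * ((j + 1) * (p - 1) + 1) :=
        lt_of_le_of_ne (hsub j hj) (Ne.symm hne)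
      have : ∑ i ∈ Finset.range (N + 1), d (i + 1) * p <
          ∑ i ∈ Finset.range (N + 1), d (i + 1) * ((i + 1) * (p - 1) + 1) :=
        Finset.sum_lt_sum hsub ⟨j, hj, hlt⟩
      omega
    -- for j ≥ 1 (index j+1 ≥ 2), d (j+1) = 0
    have hzero : ∀ j, 2 ≤ j → d j = 0 := by
      intro j hj
      rcases Nat.lt_or_ge j (N + 2) with h | h
      · obtain ⟨i, rfl⟩ : ∃ i, j = i + 1 := ⟨j - 1, by omega⟩
        have hi : i ∈ Finset.range (N + 1) := Finset.mem_range.mpr (by omega)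
        have := hterm i hi
        have hgt : p < (i + 1) * (p - 1) + 1 := by
          have h2 : 2 * (p - 1) ≤ (i + 1) * (p - 1) := Nat.mul_le_mul_right _ (by omega)
          omega
        by_contra hd
        have hd' : 0 < d (i + 1) := Nat.pos_of_ne_zero hd
        have hlt := mul_lt_mul_of_pos_left hgt hd'
        rw [this] at hlt
        exact lt_irrefl _ hlt
      · exact hd0 j (by omega)
    -- d 1 = r
    have hd1 : d 1 = r := by
      have : S = d 1 := by
        rw [hSdef]
        rw [Finset.sum_eq_single 0]
        · intro i _ hi
          exact hzero (i + 1) (by omega)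
        · intro h0
          exact absurd (Finset.mem_range.mpr (by omega)) h0
      omega
    -- d 0 = m - r
    have hd0' : d 0 = m - r := by
      have hsplit : ∑ j ∈ Finset.range (N + 2), d j
          = (∑ j ∈ Finset.range (N + 1), d (j + 1)) + d 0 := Finset.sum_range_succ' d (N + 1)
      omega
    exact ⟨hd0', hd1, hzero⟩
  · -- backward direction
    rintro ⟨h0, h1, h2⟩
    rw [hSdef, Finset.sum_eq_single 0]
    · exact h1
    · intro i _ hi
      exact h2 (i + 1) (by omega)
    · intro h0'
      exact absurd (Finset.mem_range.mpr (by omega)) h0'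
end

section
/- Let p be a prime and r, m positive integers with r < p and r ≤ m. Then the only finitely supported sequence d_0, d_1, d_2, ... of non-negative integers satisfying ∑_{j≥0} d_j = m and ∑_{j≥1} d_j (jp - j + 1) = rp is d_0 = m - r, d_1 = r, d_j = 0 for j ≥ 2. -/
/-- If `r < p` then the only finitely supported sequence `(d_j)` of naturals with
`∑_j d_j = m` and `∑_{j ≥ 1} d_j (jp - j + 1) = rp` is `d_0 = m - r`, `d_1 = r`,
`d_j = 0` for `j ≥ 2`. -/
theorem stmt12 (p : ℕ) (hp : p.Prime) (r m : ℕ) (hr : 1 ≤ r) (hrm : r ≤ m) (hrp : r < p)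
    (d : ℕ → ℕ) (hfin : (Function.support d).Finite)
    (hsum : ∑ᶠ j, d j = m)
    (hweight : ∑ᶠ j, d (j + 1) * ((j + 1) * p - (j + 1) + 1) = r * p) :
    d 0 = m - r ∧ d 1 = r ∧ ∀ j, 2 ≤ j → d j = 0 := by
  obtain ⟨N, hN1, hN⟩ : ∃ N, 1 ≤ N ∧ ∀ j, N ≤ j → d j = 0 := by
    obtain ⟨M, hM⟩ := hfin.bddAbove
    refine ⟨M + 1, by omega, fun j hj => ?_⟩
    by_contra h
    exact absurd (hM h) (by omega)
  obtain ⟨q, rfl⟩ : ∃ q, p = q + 1 := ⟨p - 1, by have := hp.two_le; omega⟩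
  have hq : r ≤ q := by omega
  -- rewrite finsums as finite sums
  have hsum' : ∑ j ∈ Finset.range (N + 1), d j = m := by
    rw [← hsum]
    refine (finsum_eq_sum_of_support_subset _ ?_).symm
    intro j hj
    simp only [Finset.coe_range, Set.mem_Iio]
    by_contra h
    exact hj (hN j (by omega))
  have hweight' : ∑ j ∈ Finset.range N,
      d (j + 1) * ((j + 1) * (q + 1) - (j + 1) + 1) = r * (q + 1) := by
    rw [← hweight]
    refine (finsum_eq_sum_of_support_subset _ ?_).symm
    intro j hj
    simp only [Finset.coe_range, Set.mem_Iio]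
    by_contra h
    have : d (j + 1) = 0 := hN (j + 1) (by omega)
    simp [this] at hj
  set A := ∑ j ∈ Finset.range N, d (j + 1) with hA
  set B := ∑ j ∈ Finset.range N, (j + 1) * d (j + 1) with hB
  have hkey : B * q + A = r * q + r := by
    have : ∑ j ∈ Finset.range N, d (j + 1) * ((j + 1) * (q + 1) - (j + 1) + 1)
        = ∑ j ∈ Finset.range N, ((j + 1) * d (j + 1) * q + d (j + 1)) := by
      refine Finset.sum_congr rfl fun j _ => ?_
      have h1 : (j + 1) * (q + 1) = (j + 1) * q + (j + 1) := by ring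
      rw [h1]
      have h2 : (j + 1) * q + (j + 1) - (j + 1) + 1 = (j + 1) * q + 1 := by omega
      rw [h2]; ring
    rw [this, Finset.sum_add_distrib, ← Finset.sum_mul] at hweight'
    rw [show r * (q + 1) = r * q + r by ring] at hweight'
    exact hweight'
  have hAB : A ≤ B := Finset.sum_le_sum fun j _ =>
    Nat.le_mul_of_pos_left _ (Nat.succ_pos j)
  have hA0 : A = 0 → B = 0 := by
    intro h
    refine Finset.sum_eq_zero fun j hj => ?_
    have := (Finset.sum_eq_zero_iff.mp h) j hj
    simp [this]
  -- B = r and A = r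
  have hrB : r ≤ B := by
    have h1 : r * (q + 1) ≤ B * (q + 1) := by nlinarith
    exact Nat.le_of_mul_le_mul_right h1 (by omega)
  have hBr : B = r := by
    by_contra h
    have hB1 : r + 1 ≤ B := by omega
    have : A = 0 := by nlinarith
    have := hA0 this
    omega
  have hAr : A = r := by
    subst hBr; omega
  -- termwise equality forces d (j+1) = 0 for j ≥ 1
  have hterm : ∀ j ∈ Finset.range N, d (j + 1) = (j + 1) * d (j + 1) := by
    have := (Finset.sum_eq_sum_iff_of_le (fun j _ =>
      Nat.le_mul_of_pos_left (d (j + 1)) (Nat.succ_pos j))).mp (by rw [← hA, ← hB, hAr, hBr])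
    exact this
  have hzero : ∀ j, 2 ≤ j → d j = 0 := by
    intro j hj
    rcases le_or_gt N j with h | h
    · exact hN j h
    · have hmem : j - 1 ∈ Finset.range N := Finset.mem_range.mpr (by omega)
      have := hterm (j - 1) hmem
      have hje : j - 1 + 1 = j := by omega
      rw [hje] at this
      nlinarith
  have hd1 : d 1 = r := by
    rw [← hAr, hA]
    rw [Finset.sum_eq_single_of_mem 0 (Finset.mem_range.mpr hN1)]
    intro j hj hj0
    exact hzero (j + 1) (by omega)
  have hd0 : d 0 = m - r := by
    have := Finset.sum_range_succ' d N
    rw [hsum'] at this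
    rw [← hA] at this
    omega
  exact ⟨hd0, hd1, hzero⟩
end
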